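/- Let y, u₁, u₂ ∈ ℝ^m with u₁, u₂ linearly independent and y not simultaneously orthogonal to both u₁ and u₂. Let u(t) = u₁ cos t + u₂ sin t and f(t) = ‖y − (yᵀu(t)/‖u(t)‖²) u(t)‖². Then f has a unique minimizer and a unique maximizer on [0, π). -/

import Mathlib

open Real
open scoped RealInnerProductSpace

/-- The curve `u(t) = u₁ cos t + u₂ sin t`. -/
noncomputable def uCurve {m : ℕ} (u₁ u₂ : EuclideanSpace ℝ (Fin m)) (t : ℝ) :
    EuclideanSpace ℝ (Fin m) :=
  Real.cos t • u₁ + Real.sin t • u₂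

/-- Squared norm of the residual of projecting `y` onto the line spanned by `u(t)`. -/
noncomputable def atomF {m : ℕ} (y u₁ u₂ : EuclideanSpace ℝ (Fin m)) (t : ℝ) : ℝ :=
  ‖y - (⟪y, uCurve u₁ u₂ t⟫ / ‖uCurve u₁ u₂ t‖ ^ 2) • uCurve u₁ u₂ t‖ ^ 2

/-!
Write `f = ‖y‖² - g` with `g(t) = ⟪y, u(t)⟫² / ‖u(t)‖²`; in coordinates `g` only involves
`ℓ = (⟪y, u₁⟫, ⟪y, u₂⟫) ≠ 0` and the positive definite Gram matrix `G` of `u₁, u₂`. The minimum `0`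
of `g` is attained exactly where `ℓ ⬝ (cos t, sin t) = 0`, and by the Lagrange identity
`(ℓᵀ G⁻¹ ℓ) (vᵀ G v) - (ℓ ⬝ v)² = (ℓ × G v)² / det G` its maximum `ℓᵀ G⁻¹ ℓ` exactly where
`(cos t, sin t)` is parallel to `G⁻¹ ℓ`. A condition `α sin t = β cos t` with `(α, β) ≠ 0` has
exactly one solution in `[0, π)`.
-/

open Set

theorem existsUnique_forall_le_of_existsUnique_eq {ι β : Type*} [PartialOrder β] {S : Set ι}
    {f : ι → β} {m : β} (hm : ∀ t ∈ S, m ≤ f t) (h : ∃! t, t ∈ S ∧ f t = m) :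
    ∃! t, t ∈ S ∧ ∀ s ∈ S, f t ≤ f s := by
  obtain ⟨t₀, ⟨ht₀, hft₀⟩, huniq⟩ := h
  refine ⟨t₀, ⟨ht₀, fun s hs => hft₀ ▸ hm s hs⟩, fun t ⟨ht, hmin⟩ => huniq t ⟨ht, ?_⟩⟩
  exact le_antisymm (hft₀ ▸ hmin t₀ ht₀) (hm t ht)

theorem existsUnique_forall_ge_of_existsUnique_eq {ι β : Type*} [PartialOrder β] {S : Set ι}
    {f : ι → β} {m : β} (hm : ∀ t ∈ S, f t ≤ m) (h : ∃! t, t ∈ S ∧ f t = m) :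
    ∃! t, t ∈ S ∧ ∀ s ∈ S, f s ≤ f t :=
  existsUnique_forall_le_of_existsUnique_eq (β := βᵒᵈ) hm h

theorem existsUnique_mul_sin_eq_mul_cos {α β : ℝ} (h : α ≠ 0 ∨ β ≠ 0) :
    ∃! t, t ∈ Ico 0 π ∧ α * sin t = β * cos t := by
  set z : ℂ := ⟨α, β⟩
  refine existsUnique_of_exists_of_unique
    ⟨toIcoMod pi_pos 0 z.arg, toIcoMod_mem_Ico' pi_pos _, ?_⟩ ?_
  · have hα : α = ‖z‖ * cos z.arg := (Complex.norm_mul_cos_arg z).symm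
    have hβ : β = ‖z‖ * sin z.arg := (Complex.norm_mul_sin_arg z).symm
    rw [toIcoMod, zsmul_eq_mul, sin_sub_int_mul_pi, cos_sub_int_mul_pi]
    linear_combination ((-1) ^ toIcoDiv pi_pos 0 z.arg * sin z.arg) * hα -
      ((-1) ^ toIcoDiv pi_pos 0 z.arg * cos z.arg) * hβ
  · rintro s t ⟨⟨hs₀, hsπ⟩, hs⟩ ⟨⟨ht₀, htπ⟩, ht⟩
    have hsin : sin (s - t) = 0 := by
      rw [sin_sub]
      rcases h with hα | hβ
      · refine (mul_eq_zero.mp ?_).resolve_left hα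
        linear_combination cos t * hs - cos s * ht
      · refine (mul_eq_zero.mp ?_).resolve_left hβ
        linear_combination sin t * hs - sin s * ht
    rw [sin_eq_zero_iff_of_lt_of_lt (by linarith) (by linarith)] at hsin
    linarith

/-- `⟪y, u(t)⟫² / ‖u(t)‖²` in coordinates: `a = ⟪y, u₁⟫`, `b = ⟪y, u₂⟫`, and `[[A, B], [B, C]]` is
the Gram matrix `G` of `u₁, u₂`. -/
noncomputable def rayleighQuot (a b A B C t : ℝ) : ℝ :=
  (a * cos t + b * sin t) ^ 2 / (A * cos t ^ 2 + 2 * B * cos t * sin t + C * sin t ^ 2)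

section rayleighQuot

variable {a b A B C : ℝ}

theorem quadForm_cos_sin_pos (hA : 0 < A) (hD : B ^ 2 < A * C) (t : ℝ) :
    0 < A * cos t ^ 2 + 2 * B * cos t * sin t + C * sin t ^ 2 := by
  have hsq : A * (A * cos t ^ 2 + 2 * B * cos t * sin t + C * sin t ^ 2) =
      (A * cos t + B * sin t) ^ 2 + (A * C - B ^ 2) * sin t ^ 2 := by ring
  refine pos_of_mul_pos_right (hsq ▸ ?_) hA.le
  rcases eq_or_ne (sin t) 0 with hs | hs
  · have hc : cos t ≠ 0 := fun hc => by simpa [hs, hc] using sin_sq_add_cos_sq t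
    rw [hs, mul_zero, add_zero, zero_pow two_ne_zero, mul_zero, add_zero]
    positivity
  · have := sq_pos_of_ne_zero hs
    nlinarith [sq_nonneg (A * cos t + B * sin t)]

theorem rayleighQuot_nonneg (t : ℝ) (hA : 0 < A) (hD : B ^ 2 < A * C) :
    0 ≤ rayleighQuot a b A B C t :=
  div_nonneg (sq_nonneg _) (quadForm_cos_sin_pos hA hD t).le

theorem rayleighQuot_eq_sub (t : ℝ) (hA : 0 < A) (hD : B ^ 2 < A * C) :
    rayleighQuot a b A B C t = (a ^ 2 * C - 2 * a * b * B + b ^ 2 * A) / (A * C - B ^ 2) -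
      ((a * C - b * B) * sin t - (b * A - a * B) * cos t) ^ 2 /
        ((A * C - B ^ 2) * (A * cos t ^ 2 + 2 * B * cos t * sin t + C * sin t ^ 2)) := by
  have hQ := (quadForm_cos_sin_pos hA hD t).ne'
  have hD' : A * C - B ^ 2 ≠ 0 := by linarith
  rw [rayleighQuot, div_sub_div _ _ hD' (mul_ne_zero hD' hQ),
    div_eq_div_iff hQ (mul_ne_zero hD' (mul_ne_zero hD' hQ))]
  ring

theorem existsUnique_isMinOn_rayleighQuot (hab : a ≠ 0 ∨ b ≠ 0) (hA : 0 < A)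
    (hD : B ^ 2 < A * C) :
    ∃! t, t ∈ Ico 0 π ∧ ∀ s ∈ Ico 0 π, rayleighQuot a b A B C t ≤ rayleighQuot a b A B C s := by
  refine existsUnique_forall_le_of_existsUnique_eq (fun t _ => rayleighQuot_nonneg t hA hD) ?_
  refine (existsUnique_congr fun t => and_congr_right fun _ => ?_).mp
    (existsUnique_mul_sin_eq_mul_cos (α := b) (β := -a) (hab.symm.imp_right neg_ne_zero.mpr))
  rw [rayleighQuot, div_eq_zero_iff, or_iff_left (quadForm_cos_sin_pos hA hD t).ne',
    pow_eq_zero_iff two_ne_zero]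
  constructor <;> intro h <;> linarith

theorem existsUnique_isMaxOn_rayleighQuot (hab : a ≠ 0 ∨ b ≠ 0) (hA : 0 < A)
    (hD : B ^ 2 < A * C) :
    ∃! t, t ∈ Ico 0 π ∧ ∀ s ∈ Ico 0 π, rayleighQuot a b A B C s ≤ rayleighQuot a b A B C t := by
  have hD' : 0 < A * C - B ^ 2 := by linarith
  have hden (t : ℝ) :
      0 < (A * C - B ^ 2) * (A * cos t ^ 2 + 2 * B * cos t * sin t + C * sin t ^ 2) :=
    mul_pos hD' (quadForm_cos_sin_pos hA hD t)
  -- `(a C - b B, b A - a B)` is `adj G • (a, b)`, nonzero since `G` is invertible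
  have hαβ : a * C - b * B ≠ 0 ∨ b * A - a * B ≠ 0 := by
    by_contra! h
    rcases hab with ha | hb
    · exact ha ((mul_eq_zero.mp (by linear_combination A * h.1 + B * h.2 :
        a * (A * C - B ^ 2) = 0)).resolve_right hD'.ne')
    · exact hb ((mul_eq_zero.mp (by linear_combination B * h.1 + C * h.2 :
        b * (A * C - B ^ 2) = 0)).resolve_right hD'.ne')
  refine existsUnique_forall_ge_of_existsUnique_eq
    (m := (a ^ 2 * C - 2 * a * b * B + b ^ 2 * A) / (A * C - B ^ 2)) (fun t _ => ?_) ?_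
  · rw [rayleighQuot_eq_sub t hA hD]
    exact sub_le_self _ (div_nonneg (sq_nonneg _) (hden t).le)
  refine (existsUnique_congr fun t => and_congr_right fun _ => ?_).mp
    (existsUnique_mul_sin_eq_mul_cos hαβ)
  rw [rayleighQuot_eq_sub t hA hD, sub_eq_self, div_eq_zero_iff, or_iff_left (hden t).ne',
    pow_eq_zero_iff two_ne_zero, sub_eq_zero]

end rayleighQuot

section InnerProductSpace

variable {E : Type*} [NormedAddCommGroup E] [InnerProductSpace ℝ E]

theorem norm_sub_inner_div_smul_sq (y : E) {u : E} (hu : u ≠ 0) :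
    ‖y - (⟪y, u⟫ / ‖u‖ ^ 2) • u‖ ^ 2 = ‖y‖ ^ 2 - ⟪y, u⟫ ^ 2 / ‖u‖ ^ 2 := by
  have h : ‖u‖ ^ 2 ≠ 0 := pow_ne_zero 2 (norm_ne_zero_iff.mpr hu)
  rw [norm_sub_sq_real, real_inner_smul_right, norm_smul, mul_pow, Real.norm_eq_abs, sq_abs]
  field_simp
  ring

theorem norm_cos_smul_add_sin_smul_sq (u₁ u₂ : E) (t : ℝ) :
    ‖cos t • u₁ + sin t • u₂‖ ^ 2 =
      ‖u₁‖ ^ 2 * cos t ^ 2 + 2 * ⟪u₁, u₂⟫ * cos t * sin t + ‖u₂‖ ^ 2 * sin t ^ 2 := by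
  rw [norm_add_sq_real, norm_smul, norm_smul, real_inner_smul_left, real_inner_smul_right,
    mul_pow, mul_pow, Real.norm_eq_abs, Real.norm_eq_abs, sq_abs, sq_abs]
  ring

theorem cos_smul_add_sin_smul_ne_zero {u₁ u₂ : E} (h : LinearIndependent ℝ ![u₁, u₂]) (t : ℝ) :
    cos t • u₁ + sin t • u₂ ≠ 0 := fun h0 => by
  obtain ⟨hc, hs⟩ := LinearIndependent.pair_iff.mp h _ _ h0
  simpa [hc, hs] using sin_sq_add_cos_sq t

theorem inner_sq_lt_norm_sq_mul_norm_sq {u₁ u₂ : E} (h : LinearIndependent ℝ ![u₁, u₂]) :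
    ⟪u₁, u₂⟫ ^ 2 < ‖u₁‖ ^ 2 * ‖u₂‖ ^ 2 := by
  have hA : 0 < ‖u₁‖ ^ 2 := pow_pos (norm_pos_iff.mpr (by simpa using h.ne_zero 0)) 2
  have hv : ⟪u₁, u₂⟫ • u₁ - ‖u₁‖ ^ 2 • u₂ ≠ 0 := by
    rw [sub_eq_add_neg, ← neg_smul]
    exact fun h0 => hA.ne' (neg_eq_zero.mp (LinearIndependent.pair_iff.mp h _ _ h0).2)
  have hexp : ‖⟪u₁, u₂⟫ • u₁ - ‖u₁‖ ^ 2 • u₂‖ ^ 2 =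
      ‖u₁‖ ^ 2 * (‖u₁‖ ^ 2 * ‖u₂‖ ^ 2 - ⟪u₁, u₂⟫ ^ 2) := by
    rw [norm_sub_sq_real, norm_smul, norm_smul, real_inner_smul_left, real_inner_smul_right,
      mul_pow, mul_pow, Real.norm_eq_abs, Real.norm_eq_abs, sq_abs, sq_abs]
    ring
  have := hexp ▸ pow_pos (norm_pos_iff.mpr hv) 2
  nlinarith

end InnerProductSpace

theorem atomF_eq_sub_rayleighQuot {m : ℕ} (y : EuclideanSpace ℝ (Fin m))
    {u₁ u₂ : EuclideanSpace ℝ (Fin m)} (hind : LinearIndependent ℝ ![u₁, u₂]) (t : ℝ) :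
    atomF y u₁ u₂ t = ‖y‖ ^ 2 - rayleighQuot ⟪y, u₁⟫ ⟪y, u₂⟫ (‖u₁‖ ^ 2) ⟪u₁, u₂⟫ (‖u₂‖ ^ 2) t := by
  rw [atomF, uCurve, norm_sub_inner_div_smul_sq y (cos_smul_add_sin_smul_ne_zero hind t),
    norm_cos_smul_add_sin_smul_sq, inner_add_right, real_inner_smul_right, real_inner_smul_right,
    rayleighQuot]
  ring

theorem stmt_7 (m : ℕ) (y u₁ u₂ : EuclideanSpace ℝ (Fin m))
    (hind : LinearIndependent ℝ ![u₁, u₂])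
    (hy : ¬(⟪y, u₁⟫ = 0 ∧ ⟪y, u₂⟫ = 0)) :
    (∃! tmin : ℝ, tmin ∈ Set.Ico (0 : ℝ) Real.pi ∧
        ∀ t ∈ Set.Ico (0 : ℝ) Real.pi, atomF y u₁ u₂ tmin ≤ atomF y u₁ u₂ t) ∧
    (∃! tmax : ℝ, tmax ∈ Set.Ico (0 : ℝ) Real.pi ∧
        ∀ t ∈ Set.Ico (0 : ℝ) Real.pi, atomF y u₁ u₂ t ≤ atomF y u₁ u₂ tmax) := by
  have hA : 0 < ‖u₁‖ ^ 2 := pow_pos (norm_pos_iff.mpr (by simpa using hind.ne_zero 0)) 2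
  have hD := inner_sq_lt_norm_sq_mul_norm_sq hind
  have hab : ⟪y, u₁⟫ ≠ 0 ∨ ⟪y, u₂⟫ ≠ 0 := not_and_or.mp hy
  simp only [atomF_eq_sub_rayleighQuot y hind, sub_le_sub_iff_left]
  exact ⟨existsUnique_isMaxOn_rayleighQuot hab hA hD, existsUnique_isMinOn_rayleighQuot hab hA hD⟩
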